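/- (Recoding Lemma) If ω = (ω₀,…,ω_n) is an A-admissible word with ω_n ∈ {1,2,7,8}, then there exists an H-admissible word τ = (τ₀,…,τ_n) of the same length such that τ₀ = ω₀ and I_A(ω) = I_H(τ); moreover, if ω_n ∈ {1,8} then τ_n = ω_n, if ω_n = 2 then τ_n ∈ {2,4}, and if ω_n = 7 then τ_n ∈ {5,7}. -/

import Mathlib

/-- The compactified translation `T̃ = k ∘ T ∘ k⁻¹`, `T(x) = x + 1`, on `[-1,1)`. -/
noncomputable def Ttilde (x : ℝ) : ℝ :=
  if x ≤ -1/2 then -2 - 1/x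
  else if x ≤ 0 then (1 + 2*x) / (2 + 3*x)
  else 1 / (2 - x)

/-- The compactified inversion `S̃ = k ∘ S ∘ k⁻¹`, `S(x) = -1/x`, on `[-1,1)`. -/
noncomputable def Stilde (x : ℝ) : ℝ :=
  if x < 0 then x + 1 else if x = 0 then -1 else x - 1

/-- The compactified inverse translation `T̃⁻¹ = k ∘ T⁻¹ ∘ k⁻¹` on `[-1,1)`. -/
noncomputable def Tinvtilde (x : ℝ) : ℝ :=
  if x ≤ 0 then -1 / (2 + x)
  else if x ≤ 1/2 then (1 - 2*x) / (3*x - 2)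
  else 2 - 1/x

/-- The Artin map `f̃_A : [-1,1) → [-1,1)`. -/
noncomputable def fA (x : ℝ) : ℝ :=
  if x < -1/2 then Ttilde x
  else if x < 1/2 then Stilde x
  else Tinvtilde x

/-- The Hurwitz map `f̃_H : [-1,1) → [-1,1)`. -/
noncomputable def fH (x : ℝ) : ℝ :=
  if x < -1/3 then Ttilde x
  else if x < 1/3 then Stilde x
  else Tinvtilde x

/-- The Markov partition `J₁,…,J₈` of `[-1,1)`, indexed by `Fin 8`
(index `i : Fin 8` corresponds to the symbol `i+1 ∈ {1,…,8}`). -/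
noncomputable def Jint : Fin 8 → Set ℝ :=
  ![Set.Ico (-1) (-2/3), Set.Ico (-2/3) (-1/2), Set.Ico (-1/2) (-1/3), Set.Ico (-1/3) 0,
    Set.Ico 0 (1/3), Set.Ico (1/3) (1/2), Set.Ico (1/2) (2/3), Set.Ico (2/3) 1]

/-- The Artin transition matrix `M_A` (rows/columns indexed by `Fin 8`,
index `i` corresponding to symbol `i+1`). -/
def MA : Matrix (Fin 8) (Fin 8) ℤ :=
  !![1,1,0,0,0,0,0,0;
     0,0,1,1,0,0,0,0;
     0,0,0,0,0,0,1,0;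
     0,0,0,0,0,0,0,1;
     1,0,0,0,0,0,0,0;
     0,1,0,0,0,0,0,0;
     0,0,0,0,1,1,0,0;
     0,0,0,0,0,0,1,1]

/-- The Hurwitz transition matrix `M_H`. -/
def MH : Matrix (Fin 8) (Fin 8) ℤ :=
  !![1,1,0,0,0,0,0,0;
     0,0,1,1,0,0,0,0;
     0,0,0,0,1,0,0,0;
     0,0,0,0,0,0,0,1;
     1,0,0,0,0,0,0,0;
     0,0,0,1,0,0,0,0;
     0,0,0,0,1,1,0,0;
     0,0,0,0,0,0,1,1]

/-- The Artin cylinder interval `I_A(ω₀,…,ω_n) = ⋂ᵢ f̃_A⁻ⁱ(J_{ωᵢ})`. -/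
noncomputable def cylA (n : ℕ) (w : Fin (n + 1) → Fin 8) : Set ℝ :=
  ⋂ i : Fin (n + 1), fA^[(i : ℕ)] ⁻¹' Jint (w i)

/-- The Hurwitz cylinder interval `I_H(τ₀,…,τ_n) = ⋂ᵢ f̃_H⁻ⁱ(J_{τᵢ})`. -/
noncomputable def cylH (n : ℕ) (w : Fin (n + 1) → Fin 8) : Set ℝ :=
  ⋂ i : Fin (n + 1), fH^[(i : ℕ)] ⁻¹' Jint (w i)

/-!
Away from `J₃ ∪ J₆` the maps `f̃_A` and `f̃_H` coincide, so every other symbol is copied. From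
`J₃` the Artin itinerary is forced to continue `3, 7, c, d` with `(c, d) ∈ {(5,1), (6,2)}`, while
the Hurwitz itinerary of the same point reads `3, 5, 1, d`: the third iterates of the two maps agree
on `J₃`, and `d` determines `c`. Symmetrically `6, 2, c, d` becomes `6, 4, 8, d` on `J₆`.
Recoding these blocks from left to right gives `τ`; since `ω_n ∈ {1, 2, 7, 8}`, a block cut off by
the end of the word is `3, 7` or `6, 2`, recoded as `3, 5` or `6, 4`. In `Fin 8` the symbol `k` is
the index `k - 1`.
-/

open Set

section Cylinder

variable {α ι : Type*} (f : α → α) (J : ι → Set α)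

def cylinderSet (n : ℕ) (w : Fin (n + 1) → ι) : Set α :=
  ⋂ i : Fin (n + 1), f^[i] ⁻¹' J (w i)

theorem cylinderSet_zero (w : Fin 1 → ι) : cylinderSet f J 0 w = J (w 0) := by
  ext x
  simp [cylinderSet, Fin.forall_fin_one]

theorem cylinderSet_cons {n : ℕ} (a : ι) (w : Fin (n + 1) → ι) :
    cylinderSet f J (n + 1) (Fin.cons a w) = J a ∩ f ⁻¹' cylinderSet f J n w := by
  ext x
  simp [cylinderSet, Fin.forall_fin_succ]

theorem cylinderSet_subset_head {n : ℕ} (w : Fin (n + 1) → ι) :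
    cylinderSet f J n w ⊆ J (w 0) :=
  iInter_subset (fun i : Fin (n + 1) => f^[i] ⁻¹' J (w i)) 0

end Cylinder

section Admissible

variable {ι R : Type*} [One R] (M : Matrix ι ι R)

def Admissible (n : ℕ) (w : Fin (n + 1) → ι) : Prop :=
  ∀ i : Fin n, M (w i.castSucc) (w i.succ) = 1

theorem admissible_cons {n : ℕ} {a : ι} {w : Fin (n + 1) → ι} :
    Admissible M (n + 1) (Fin.cons a w) ↔ M a (w 0) = 1 ∧ Admissible M n w := by
  simp [Admissible, Fin.forall_fin_succ]

end Admissible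

theorem cylA_zero (w : Fin 1 → Fin 8) : cylA 0 w = Jint (w 0) := cylinderSet_zero fA Jint w

theorem cylH_zero (w : Fin 1 → Fin 8) : cylH 0 w = Jint (w 0) := cylinderSet_zero fH Jint w

theorem cylA_cons {n : ℕ} (a : Fin 8) (w : Fin (n + 1) → Fin 8) :
    cylA (n + 1) (Fin.cons a w) = Jint a ∩ fA ⁻¹' cylA n w :=
  cylinderSet_cons fA Jint a w

theorem cylH_cons {n : ℕ} (a : Fin 8) (w : Fin (n + 1) → Fin 8) :
    cylH (n + 1) (Fin.cons a w) = Jint a ∩ fH ⁻¹' cylH n w :=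
  cylinderSet_cons fH Jint a w

theorem cylA_subset_head {n : ℕ} (w : Fin (n + 1) → Fin 8) : cylA n w ⊆ Jint (w 0) :=
  cylinderSet_subset_head fA Jint w

section Branches

variable {x : ℝ}

theorem fA_of_lt_neg_half (hx : x < -1/2) : fA x = -2 - 1/x := by
  rw [fA, if_pos hx, Ttilde, if_pos hx.le]

theorem fA_of_neg (h₁ : -1/2 ≤ x) (h₂ : x < 0) : fA x = x + 1 := by
  rw [fA, if_neg h₁.not_gt, if_pos (by linarith), Stilde, if_pos h₂]

theorem fA_zero : fA 0 = -1 := by norm_num [fA, Stilde]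

theorem fA_of_pos (h₁ : 0 < x) (h₂ : x < 1/2) : fA x = x - 1 := by
  rw [fA, if_neg (by linarith), if_pos h₂, Stilde, if_neg h₁.not_gt, if_neg h₁.ne']

theorem fA_of_half_le (hx : 1/2 ≤ x) : fA x = 2 - 1/x := by
  rw [fA, if_neg (by linarith), if_neg hx.not_gt, Tinvtilde, if_neg (by linarith)]
  rcases hx.eq_or_lt with rfl | hx
  · norm_num
  · rw [if_neg hx.not_ge]

theorem fH_of_le_neg_half (hx : x ≤ -1/2) : fH x = -2 - 1/x := by
  rw [fH, if_pos (by linarith), Ttilde, if_pos hx]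

theorem fH_of_neg_half_le (h₁ : -1/2 ≤ x) (h₂ : x < -1/3) :
    fH x = (1 + 2*x) / (2 + 3*x) := by
  rw [fH, if_pos h₂, Ttilde]
  rcases h₁.eq_or_lt with rfl | h₁
  · norm_num
  · rw [if_neg h₁.not_ge, if_pos (by linarith)]

theorem fH_of_neg (h₁ : -1/3 ≤ x) (h₂ : x < 0) : fH x = x + 1 := by
  rw [fH, if_neg h₁.not_gt, if_pos (by linarith), Stilde, if_pos h₂]

theorem fH_zero : fH 0 = -1 := by norm_num [fH, Stilde]

theorem fH_of_pos (h₁ : 0 < x) (h₂ : x < 1/3) : fH x = x - 1 := by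
  rw [fH, if_neg (by linarith), if_pos h₂, Stilde, if_neg h₁.not_gt, if_neg h₁.ne']

theorem fH_of_third_le (h₁ : 1/3 ≤ x) (h₂ : x < 1/2) : fH x = (1 - 2*x) / (3*x - 2) := by
  rw [fH, if_neg (by linarith), if_neg h₁.not_gt, Tinvtilde, if_neg (by linarith), if_pos h₂.le]

theorem fH_of_half_lt (hx : 1/2 < x) : fH x = 2 - 1/x := by
  rw [fH, if_neg (by linarith), if_neg (by linarith), Tinvtilde, if_neg (by linarith),
    if_neg hx.not_ge]

end Branches

theorem eqOn_fA_fH {a : Fin 8} (h₂ : a ≠ 2) (h₅ : a ≠ 5) : EqOn fA fH (Jint a) := by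
  intro x hx
  unfold fA fH
  fin_cases a <;> simp at h₂ h₅ <;> obtain ⟨h, h'⟩ := hx <;> norm_num at h h' <;>
    split_ifs <;> first | rfl | linarith

theorem MH_eq_one_of_MA_eq_one {a c : Fin 8} (h₂ : a ≠ 2) (h₅ : a ≠ 5) (h : MA a c = 1) :
    MH a c = 1 := by
  revert c; fin_cases a <;> simp at h₂ h₅ <;> decide

theorem orbit_of_mem_Jint_two {x : ℝ} (hx : x ∈ Jint 2) :
    fA x ∈ Jint 6 ∧ fA (fA x) ∈ Ico 0 (1/2) ∧ fH x ∈ Jint 4 ∧ fH (fH x) ∈ Jint 0 ∧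
      fH (fH (fH x)) = fA (fA (fA x)) := by
  obtain ⟨h₁, h₂⟩ : -1/2 ≤ x ∧ x < -1/3 := hx
  -- at `x = -1/2` both orbits pass through `0`, where `S̃` is not `y ↦ y - 1`
  rcases h₁.eq_or_lt with rfl | h₁
  · have hA : fA (-1/2) = 1/2 := by rw [fA_of_neg] <;> norm_num
    have hA' : fA (1/2) = 0 := by rw [fA_of_half_le] <;> norm_num
    have hH : fH (-1/2) = 0 := by rw [fH_of_neg_half_le] <;> norm_num
    have hH' : fH (-1) = -1 := by rw [fH_of_le_neg_half] <;> norm_num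
    rw [hA, hA', hH, fA_zero, fH_zero, hH']
    refine ⟨?_, ?_, ?_, ?_, rfl⟩ <;> constructor <;> norm_num
  have hx₁ : 0 < x + 1 := by linarith
  have hx₂ : 0 < 2 + 3*x := by linarith
  have hy₁ : 0 < (2*x + 1) / (x + 1) := div_pos (by linarith) hx₁
  have hy₂ : (2*x + 1) / (x + 1) < 1/2 := by rw [div_lt_iff₀ hx₁]; linarith
  have hz₁ : 0 < (1 + 2*x) / (2 + 3*x) := div_pos (by linarith) hx₂
  have hz₂ : (1 + 2*x) / (2 + 3*x) < 1/3 := by rw [div_lt_iff₀ hx₂]; linarith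
  have hv₁ : -1 ≤ -(x + 1) / (2 + 3*x) := by rw [le_div_iff₀ hx₂]; linarith
  have hv₂ : -(x + 1) / (2 + 3*x) < -2/3 := by rw [div_lt_iff₀ hx₂]; linarith
  have hA₁ : fA x = x + 1 := fA_of_neg h₁.le (by linarith)
  have hA₂ : fA (x + 1) = (2*x + 1) / (x + 1) := by
    rw [fA_of_half_le (by linarith)]; field_simp [hx₁.ne']; ring
  have hA₃ : fA ((2*x + 1) / (x + 1)) = x / (x + 1) := by
    rw [fA_of_pos hy₁ hy₂, div_sub_one hx₁.ne']; ring
  have hH₁ : fH x = (1 + 2*x) / (2 + 3*x) := fH_of_neg_half_le h₁.le h₂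
  have hH₂ : fH ((1 + 2*x) / (2 + 3*x)) = -(x + 1) / (2 + 3*x) := by
    rw [fH_of_pos hz₁ hz₂, div_sub_one hx₂.ne']; ring
  have hH₃ : fH (-(x + 1) / (2 + 3*x)) = x / (x + 1) := by
    rw [fH_of_le_neg_half (by linarith)]; field_simp [hx₁.ne', hx₂.ne']; ring
  rw [hA₁, hA₂, hA₃, hH₁, hH₂, hH₃]
  exact ⟨⟨by linarith, by linarith⟩, ⟨hy₁.le, hy₂⟩, ⟨hz₁.le, hz₂⟩, ⟨hv₁, hv₂⟩, rfl⟩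

theorem orbit_of_mem_Jint_five {x : ℝ} (hx : x ∈ Jint 5) :
    fA x ∈ Jint 1 ∧ fA (fA x) ∈ Ico (-1/2) 0 ∧ fH x ∈ Jint 3 ∧ fH (fH x) ∈ Jint 7 ∧
      fH (fH (fH x)) = fA (fA (fA x)) := by
  obtain ⟨h₁, h₂⟩ : 1/3 ≤ x ∧ x < 1/2 := hx
  have hx₁ : 0 < 1 - x := by linarith
  have hx₂ : 0 < 2 - 3*x := by linarith
  have hy₁ : -1/2 ≤ (2*x - 1) / (1 - x) := by rw [le_div_iff₀ hx₁]; linarith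
  have hy₂ : (2*x - 1) / (1 - x) < 0 := div_neg_of_neg_of_pos (by linarith) hx₁
  have hz₁ : -1/3 ≤ (2*x - 1) / (2 - 3*x) := by rw [le_div_iff₀ hx₂]; linarith
  have hz₂ : (2*x - 1) / (2 - 3*x) < 0 := div_neg_of_neg_of_pos (by linarith) hx₂
  have hv₁ : 2/3 ≤ (1 - x) / (2 - 3*x) := by rw [le_div_iff₀ hx₂]; linarith
  have hv₂ : (1 - x) / (2 - 3*x) < 1 := by rw [div_lt_one hx₂]; linarith
  have hA₁ : fA x = x - 1 := fA_of_pos (by linarith) h₂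
  have hA₂ : fA (x - 1) = (2*x - 1) / (1 - x) := by
    rw [fA_of_lt_neg_half (by linarith)]
    field_simp [hx₁.ne', (by linarith : x - 1 ≠ 0)]; ring
  have hA₃ : fA ((2*x - 1) / (1 - x)) = x / (1 - x) := by
    rw [fA_of_neg hy₁ hy₂, div_add_one hx₁.ne']; ring
  have hH₁ : fH x = (2*x - 1) / (2 - 3*x) := by
    rw [fH_of_third_le h₁ h₂, div_eq_div_iff (by linarith) hx₂.ne']; ring
  have hH₂ : fH ((2*x - 1) / (2 - 3*x)) = (1 - x) / (2 - 3*x) := by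
    rw [fH_of_neg hz₁ hz₂, div_add_one hx₂.ne']; ring
  have hH₃ : fH ((1 - x) / (2 - 3*x)) = x / (1 - x) := by
    rw [fH_of_half_lt (by linarith), one_div_div]; field_simp [hx₁.ne', hx₂.ne']; ring
  rw [hA₁, hA₂, hA₃, hH₁, hH₂, hH₃]
  exact ⟨⟨by linarith, by linarith⟩, ⟨hy₁, hy₂⟩, ⟨hz₁, hz₂⟩, ⟨hv₁, hv₂⟩, rfl⟩

theorem MA_path_from_six {c d : Fin 8} (hc : MA 6 c = 1) (hd : MA c d = 1) :
    c = 4 ∧ d = 0 ∨ c = 5 ∧ d = 1 := by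
  revert d; fin_cases c <;> revert hc <;> decide

theorem MA_path_from_one {c d : Fin 8} (hc : MA 1 c = 1) (hd : MA c d = 1) :
    c = 2 ∧ d = 6 ∨ c = 3 ∧ d = 7 := by
  revert d; fin_cases c <;> revert hc <;> decide

def IsTerminal (a : Fin 8) : Prop :=
  a = 0 ∨ a = 1 ∨ a = 6 ∨ a = 7

def LastCompatible (a b : Fin 8) : Prop :=
  (a = 0 → b = 0) ∧ (a = 7 → b = 7) ∧ (a = 1 → b = 1 ∨ b = 3) ∧ (a = 6 → b = 4 ∨ b = 6)

structure IsRecoding {n : ℕ} (w t : Fin (n + 1) → Fin 8) : Prop where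
  admissible : Admissible MH n t
  head_eq : t 0 = w 0
  cylA_eq_cylH : cylA n w = cylH n t
  lastCompatible : LastCompatible (w (Fin.last n)) (t (Fin.last n))

theorem isRecoding_self (w : Fin 1 → Fin 8) : IsRecoding w w where
  admissible := fun i => i.elim0
  head_eq := rfl
  cylA_eq_cylH := by rw [cylA_zero, cylH_zero]
  lastCompatible := ⟨id, id, Or.inl, Or.inr⟩

theorem IsRecoding.cons {n : ℕ} {w t : Fin (n + 1) → Fin 8} (h : IsRecoding w t) {a : Fin 8}
    (hf : EqOn fA fH (Jint a)) (hM : MH a (w 0) = 1) :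
    IsRecoding (Fin.cons a w) (Fin.cons a t) where
  admissible := (admissible_cons MH).2 ⟨h.head_eq ▸ hM, h.admissible⟩
  head_eq := rfl
  cylA_eq_cylH := by
    ext x
    simp only [cylA_cons, cylH_cons, mem_inter_iff, mem_preimage, h.cylA_eq_cylH]
    exact and_congr_right fun hx => by rw [hf hx]
  lastCompatible := by simpa only [Fin.cons_last] using h.lastCompatible

/-- The Artin block `a, b, c, d` (for every `M_A`-path `b → c → d`) and the Hurwitz block
`a, b', e, d` cut out the same points of `J a`. -/
structure RecodingBlock (a b b' e : Fin 8) : Prop where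
  eq_of_MA_eq_one : ∀ c, MA a c = 1 → c = b
  not_isTerminal : ∀ c, MA b c = 1 → ¬ IsTerminal c
  MH_head : MH a b' = 1
  MH_mid : MH b' e = 1
  MH_tail : ∀ c d, MA b c = 1 → MA c d = 1 → MH e d = 1
  lastCompatible : LastCompatible b b'
  mapsTo_fA : ∀ x ∈ Jint a, fA x ∈ Jint b
  mapsTo_fH : ∀ x ∈ Jint a, fH x ∈ Jint b'
  mapsTo_fH_fH : ∀ x ∈ Jint a, fH (fH x) ∈ Jint e
  fH_three_eq : ∀ x ∈ Jint a, fH (fH (fH x)) = fA (fA (fA x))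
  mem_of_fA_mem : ∀ x ∈ Jint a, ∀ c d, MA b c = 1 → MA c d = 1 →
    fA (fA (fA x)) ∈ Jint d → fA (fA x) ∈ Jint c

namespace RecodingBlock

variable {a b b' e : Fin 8}

theorem isRecoding_pair (B : RecodingBlock a b b' e) : IsRecoding ![a, b] ![a, b'] where
  admissible := fun i => by fin_cases i; exact B.MH_head
  head_eq := rfl
  cylA_eq_cylH := by
    change cylA 1 (Fin.cons a ![b]) = cylH 1 (Fin.cons a ![b'])
    rw [cylA_cons, cylH_cons, cylA_zero, cylH_zero]
    ext x
    exact ⟨fun hx => ⟨hx.1, B.mapsTo_fH x hx.1⟩, fun hx => ⟨hx.1, B.mapsTo_fA x hx.1⟩⟩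
  lastCompatible := B.lastCompatible

theorem isRecoding_cons (B : RecodingBlock a b b' e) {n : ℕ} {c : Fin 8}
    {w t : Fin (n + 1) → Fin 8} (h : IsRecoding w t) (hbc : MA b c = 1) (hcd : MA c (w 0) = 1) :
    IsRecoding (Fin.cons a (Fin.cons b (Fin.cons c w)))
      (Fin.cons a (Fin.cons b' (Fin.cons e t))) where
  admissible := (admissible_cons MH).2 ⟨B.MH_head, (admissible_cons MH).2 ⟨B.MH_mid,
    (admissible_cons MH).2 ⟨B.MH_tail c _ hbc (h.head_eq ▸ hcd), h.admissible⟩⟩⟩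
  head_eq := rfl
  cylA_eq_cylH := by
    ext x
    simp only [cylA_cons, cylH_cons, mem_inter_iff, mem_preimage, ← h.cylA_eq_cylH]
    constructor
    · rintro ⟨hx, -, -, hw⟩
      exact ⟨hx, B.mapsTo_fH x hx, B.mapsTo_fH_fH x hx, by rwa [B.fH_three_eq x hx]⟩
    · rintro ⟨hx, -, -, hw⟩
      rw [B.fH_three_eq x hx] at hw
      exact ⟨hx, B.mapsTo_fA x hx, B.mem_of_fA_mem x hx c _ hbc hcd (cylA_subset_head w hw), hw⟩
  lastCompatible := by simpa only [Fin.cons_last] using h.lastCompatible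

theorem exists_isRecoding_cons (B : RecodingBlock a b b' e) {n : ℕ}
    (ih : ∀ m < n + 1, ∀ v : Fin (m + 1) → Fin 8, Admissible MA m v →
      IsTerminal (v (Fin.last m)) → ∃ t, IsRecoding v t)
    {w : Fin (n + 1) → Fin 8} (hw : Admissible MA (n + 1) (Fin.cons a w))
    (hlast : IsTerminal (w (Fin.last n))) : ∃ t, IsRecoding (Fin.cons a w) t := by
  obtain ⟨hab, hw⟩ := (admissible_cons MA).1 hw
  have hb : w 0 = b := B.eq_of_MA_eq_one _ hab
  obtain _ | _ | k := n
  · obtain rfl : w = ![b] := by funext i; fin_cases i; exact hb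
    exact ⟨_, B.isRecoding_pair⟩
  · exact absurd hlast (B.not_isTerminal _ (hb ▸ hw 0))
  · cases w using Fin.consCases with | cons b₀ w =>
    cases w using Fin.consCases with | cons c v =>
    obtain rfl : b₀ = b := hb
    obtain ⟨hbc, hv⟩ := (admissible_cons MA).1 hw
    obtain ⟨hcd, hv⟩ := (admissible_cons MA).1 hv
    simp only [Fin.cons_last] at hlast
    obtain ⟨t, ht⟩ := ih k (by omega) v hv hlast
    exact ⟨_, B.isRecoding_cons ht hbc hcd⟩

end RecodingBlock

theorem recodingBlock_two : RecodingBlock 2 6 4 0 where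
  eq_of_MA_eq_one := by decide
  not_isTerminal := by unfold IsTerminal; decide
  MH_head := rfl
  MH_mid := rfl
  MH_tail c d hc hd := by obtain ⟨rfl, rfl⟩ | ⟨rfl, rfl⟩ := MA_path_from_six hc hd <;> rfl
  lastCompatible := by unfold LastCompatible; decide
  mapsTo_fA _ hx := (orbit_of_mem_Jint_two hx).1
  mapsTo_fH _ hx := (orbit_of_mem_Jint_two hx).2.2.1
  mapsTo_fH_fH _ hx := (orbit_of_mem_Jint_two hx).2.2.2.1
  fH_three_eq _ hx := (orbit_of_mem_Jint_two hx).2.2.2.2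
  mem_of_fA_mem x hx c d hc hd hfd := by
    obtain ⟨hy₀, hy⟩ := (orbit_of_mem_Jint_two hx).2.1
    generalize fA (fA x) = y at hy₀ hy hfd ⊢
    obtain ⟨rfl, rfl⟩ | ⟨rfl, rfl⟩ := MA_path_from_six hc hd <;>
      rcases hy₀.eq_or_lt with rfl | hy₀
    · exact ⟨le_rfl, by norm_num⟩
    · rw [fA_of_pos hy₀ hy] at hfd
      exact ⟨hy₀.le, by linarith [hfd.2]⟩
    · rw [fA_zero] at hfd
      exact absurd hfd.1 (by norm_num)
    · rw [fA_of_pos hy₀ hy] at hfd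
      exact ⟨by linarith [hfd.1], hy⟩

theorem recodingBlock_five : RecodingBlock 5 1 3 7 where
  eq_of_MA_eq_one := by decide
  not_isTerminal := by unfold IsTerminal; decide
  MH_head := rfl
  MH_mid := rfl
  MH_tail c d hc hd := by obtain ⟨rfl, rfl⟩ | ⟨rfl, rfl⟩ := MA_path_from_one hc hd <;> rfl
  lastCompatible := by unfold LastCompatible; decide
  mapsTo_fA _ hx := (orbit_of_mem_Jint_five hx).1
  mapsTo_fH _ hx := (orbit_of_mem_Jint_five hx).2.2.1
  mapsTo_fH_fH _ hx := (orbit_of_mem_Jint_five hx).2.2.2.1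
  fH_three_eq _ hx := (orbit_of_mem_Jint_five hx).2.2.2.2
  mem_of_fA_mem x hx c d hc hd hfd := by
    obtain ⟨hy₀, hy⟩ := (orbit_of_mem_Jint_five hx).2.1
    generalize fA (fA x) = y at hy₀ hy hfd ⊢
    rw [fA_of_neg hy₀ hy] at hfd
    obtain ⟨rfl, rfl⟩ | ⟨rfl, rfl⟩ := MA_path_from_one hc hd
    · exact ⟨hy₀, by linarith [hfd.2]⟩
    · exact ⟨by linarith [hfd.1], hy⟩

theorem exists_isRecoding (n : ℕ) (w : Fin (n + 1) → Fin 8) (hw : Admissible MA n w)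
    (hlast : IsTerminal (w (Fin.last n))) : ∃ t, IsRecoding w t := by
  induction n using Nat.strong_induction_on with
  | _ n ih =>
  obtain _ | n := n
  · exact ⟨w, isRecoding_self w⟩
  cases w using Fin.consCases with | cons a w =>
  rw [Fin.cons_last] at hlast
  by_cases h₂ : a = 2
  · subst h₂; exact recodingBlock_two.exists_isRecoding_cons ih hw hlast
  by_cases h₅ : a = 5
  · subst h₅; exact recodingBlock_five.exists_isRecoding_cons ih hw hlast
  obtain ⟨hM, hw⟩ := (admissible_cons MA).1 hw
  obtain ⟨t, ht⟩ := ih n n.lt_succ_self w hw hlast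
  exact ⟨_, ht.cons (eqOn_fA_fH h₂ h₅) (MH_eq_one_of_MA_eq_one h₂ h₅ hM)⟩

/-- (Recoding Lemma.)  If `ω = (ω₀,…,ω_n)` is `A`-admissible and its last symbol is in
`{1,2,7,8}` (i.e. the last `Fin 8`-index is in `{0,1,6,7}`), then there is an `H`-admissible
word `τ` of the same length with `τ₀ = ω₀` and `I_A(ω) = I_H(τ)`; moreover the last symbol of
`τ` equals that of `ω` if the latter is `1` or `8` (index `0` or `7`), lies in `{2,4}`
(indices `{1,3}`) if the last symbol of `ω` is `2` (index `1`), and lies in `{5,7}`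
(indices `{4,6}`) if the last symbol of `ω` is `7` (index `6`). -/
theorem recoding_lemma (n : ℕ) (w : Fin (n + 1) → Fin 8)
    (hadm : ∀ i : Fin n, MA (w i.castSucc) (w i.succ) = 1)
    (hlast : w (Fin.last n) = 0 ∨ w (Fin.last n) = 1 ∨
      w (Fin.last n) = 6 ∨ w (Fin.last n) = 7) :
    ∃ t : Fin (n + 1) → Fin 8,
      (∀ i : Fin n, MH (t i.castSucc) (t i.succ) = 1) ∧
      t 0 = w 0 ∧
      cylA n w = cylH n t ∧
      (w (Fin.last n) = 0 → t (Fin.last n) = 0) ∧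
      (w (Fin.last n) = 7 → t (Fin.last n) = 7) ∧
      (w (Fin.last n) = 1 → t (Fin.last n) = 1 ∨ t (Fin.last n) = 3) ∧
      (w (Fin.last n) = 6 → t (Fin.last n) = 4 ∨ t (Fin.last n) = 6) := by
  obtain ⟨t, ht⟩ := exists_isRecoding n w hadm hlast
  exact ⟨t, ht.admissible, ht.head_eq, ht.cylA_eq_cylH, ht.lastCompatible⟩
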